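/- For any normed BPA system G = (V, Act, R) and γ, δ ∈ V* with R_γ = R_δ: for all α, β ∈ V*, αγ ~ βγ if and only if αδ ~ βδ; in particular R_{Aγ} = R_{Aδ} for every A ∈ V. -/

import Mathlib

/-! Common definitions: labelled transition systems, branching bisimulation,
branching bisimilarity, silent states, class-change norm, BPA systems,
right-to-left finite transducers. -/

/-- A τ-path `t = t₀ →τ t₁ →τ ⋯ →τ t_k` in which every state after `t₀`
is related to `s` by `B`. -/
inductive TauSeq {S Act : Type} (tr : S → Act → S → Prop) (τ : Act)
    (B : S → S → Prop) (s : S) : S → S → Prop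
  | refl (t : S) : TauSeq tr τ B s t t
  | step {t t' t'' : S} : tr t τ t' → B s t' → TauSeq tr τ B s t' t'' →
      TauSeq tr τ B s t t''

/-- `B` is a branching bisimulation in the LTS given by `tr` with silent action `τ`. -/
def IsBranchingBisim {S Act : Type} (tr : S → Act → S → Prop) (τ : Act)
    (B : S → S → Prop) : Prop :=
  ∀ s t, B s t →
    (∀ a s', tr s a s' →
      ((a = τ ∧ B s' t) ∨
        ∃ tk t', TauSeq tr τ B s t tk ∧ tr tk a t' ∧ B s' t')) ∧
    (∀ a t', tr t a t' →
      ((a = τ ∧ B s t') ∨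
        ∃ sk s', TauSeq tr τ (fun u v => B v u) t s sk ∧ tr sk a s' ∧ B s' t'))

/-- Branching bisimilarity: `s ~ t` iff some branching bisimulation contains `(s,t)`. -/
def BBisim {S Act : Type} (tr : S → Act → S → Prop) (τ : Act) (s t : S) : Prop :=
  ∃ B, IsBranchingBisim tr τ B ∧ B s t

/-- `Steps tr s w t`: there is a path from `s` to `t` labelled by the word `w`. -/
inductive Steps {S Act : Type} (tr : S → Act → S → Prop) : S → List Act → S → Prop
  | refl (s : S) : Steps tr s [] s
  | step {s : S} {a : Act} {s' : S} {w : List Act} {t : S} :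
      tr s a s' → Steps tr s' w t → Steps tr s (a :: w) t

/-- A state is silent if only τ-labelled words can be performed from it. -/
def SilentState {S Act : Type} (tr : S → Act → S → Prop) (τ : Act) (s : S) : Prop :=
  ∀ w s', Steps tr s w s' → ∀ a ∈ w, a = τ

/-- A τ-path in which no transition is class-changing (each step stays in the same
`~`-class). -/
inductive TauNC {S Act : Type} (tr : S → Act → S → Prop) (τ : Act) : S → S → Prop
  | refl (t : S) : TauNC tr τ t t
  | step {t t' t'' : S} : tr t τ t' → BBisim tr τ t t' → TauNC tr τ t' t'' →
      TauNC tr τ t t''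

/-- `CCPath tr τ s n t`: there is a path from `s` to `t` containing exactly `n`
class-changing transitions. -/
inductive CCPath {S Act : Type} (tr : S → Act → S → Prop) (τ : Act) : S → ℕ → S → Prop
  | refl (s : S) : CCPath tr τ s 0 s
  | stepEq {s : S} {a : Act} {s' : S} {n : ℕ} {t : S} :
      tr s a s' → BBisim tr τ s s' → CCPath tr τ s' n t → CCPath tr τ s n t
  | stepNe {s : S} {a : Act} {s' : S} {n : ℕ} {t : S} :
      tr s a s' → ¬ BBisim tr τ s s' → CCPath tr τ s' n t → CCPath tr τ s (n + 1) t

/-- The class-change norm: the least number of class-changing transitions on a path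
to a silent state; `⊤` (ω) if no silent state is reachable. -/
noncomputable def ccNorm {S Act : Type} (tr : S → Act → S → Prop) (τ : Act) (s : S) : ℕ∞ :=
  sInf {n : ℕ∞ | ∃ ℓ : ℕ, n = (ℓ : ℕ∞) ∧ ∃ t, CCPath tr τ s ℓ t ∧ SilentState tr τ t}

/-- A BPA system: a finite set of rules `A →a α` (a context-free grammar in
Greibach normal form, no starting variable). -/
structure BPA (V Act : Type) where
  rules : Finset (V × Act × List V)

/-- The transition relation of the LTS `L_G` associated with a BPA system `G`:
`Aβ →a γβ` whenever `A →a γ` is a rule. -/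
def BPA.tr {V Act : Type} (G : BPA V Act) : List V → Act → List V → Prop :=
  fun s a t => ∃ (A : V) (γ β : List V), (A, a, γ) ∈ G.rules ∧ s = A :: β ∧ t = γ ++ β

/-- The (standard, syntactic) norm of a process: the length of a shortest word
leading to the empty process; `⊤` (ω) if there is none. -/
noncomputable def BPA.norm {V Act : Type} (G : BPA V Act) (α : List V) : ℕ∞ :=
  sInf {n : ℕ∞ | ∃ w : List Act, n = (w.length : ℕ∞) ∧ Steps G.tr α w []}

/-- A BPA system is normed if every variable has a finite norm. -/
def BPA.Normed {V Act : Type} (G : BPA V Act) : Prop :=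
  ∀ A : V, G.norm [A] ≠ ⊤

/-- The transition relation of `L_{G,R}`: as `L_G`, but all outgoing transitions of
states in `R*` are removed. -/
def BPA.trR {V Act : Type} (G : BPA V Act) (R : Set V) : List V → Act → List V → Prop :=
  fun s a t => G.tr s a t ∧ ¬ (∀ X ∈ s, X ∈ R)

/-- `R_γ`: the set of variables redundant w.r.t. `γ`, i.e. those `X` with `Xγ ~ γ`. -/
def RedSet {V Act : Type} (G : BPA V Act) (τ : Act) (γ : List V) : Set V :=
  {X : V | BBisim G.tr τ (X :: γ) γ}

/-- `α` is a redundancy-free prefix of `αγ`: it cannot be written as `δXβ` with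
`Xβγ ~ βγ`. -/
def RedFreePrefix {V Act : Type} (G : BPA V Act) (τ : Act) (α γ : List V) : Prop :=
  ¬ ∃ (δ : List V) (X : V) (β : List V),
      α = δ ++ X :: β ∧ BBisim G.tr τ (X :: (β ++ γ)) (β ++ γ)

/-- A finite-state transducer reading (and writing) from right to left. -/
structure Transducer (Q V : Type) where
  delta : Q → V → Q × List V
  q0 : Q

/-- Running the transducer on an input string, right to left:
`T.run α q = (q', β)` means `q' ⇐α|β= q`. -/
def Transducer.run {Q V : Type} (T : Transducer Q V) : List V → Q → Q × List V
  | [], q => (q, [])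
  | A :: α, q =>
      let p := T.run α q
      ((T.delta p.1 A).1, (T.delta p.1 A).2 ++ p.2)

/-- `T_q(α)`: the output of `T` on input `α`, started in state `q`. -/
def Transducer.out {Q V : Type} (T : Transducer Q V) (q : Q) (α : List V) : List V :=
  (T.run α q).2

/-- `q`-normal forms: `ε ∈ NF_q`, and `αA ∈ NF_q` iff `A` is a `q`-prime and
`α` is a `q'`-normal form where `q' ⇐A|A= q`. -/
inductive Transducer.NF {Q V : Type} (T : Transducer Q V) : Q → List V → Prop
  | nil (q : Q) : Transducer.NF T q []
  | snoc {q : Q} {A : V} {α : List V} :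
      (T.delta q A).2 = [A] → Transducer.NF T (T.delta q A).1 α →
      Transducer.NF T q (α ++ [A])

/-- A normal-form-computing (nfc) transducer: each `T_q(A)` is a `q`-normal form,
and `q' ⇐A|γ= q` implies `q' ⇐γ|γ= q`. -/
def Transducer.IsNFC {Q V : Type} (T : Transducer Q V) : Prop :=
  ∀ (q : Q) (A : V),
    Transducer.NF T q (T.delta q A).2 ∧ T.run (T.delta q A).2 q = T.delta q A

/-- A τ-path in `L_G` along which the `T_q`-output stays constant. -/
inductive ConstTauSeq {Q V Act : Type} (tr : List V → Act → List V → Prop) (τ : Act)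
    (T : Transducer Q V) (q : Q) : List V → List V → Prop
  | refl (α : List V) : ConstTauSeq tr τ T q α α
  | step {α α' α'' : List V} : tr α τ α' → T.out q α' = T.out q α →
      ConstTauSeq tr τ T q α' α'' → ConstTauSeq tr τ T q α α''

/-- The long move `α ⇒a_q β`. -/
def BigStep {Q V Act : Type} (G : BPA V Act) (τ : Act) (T : Transducer Q V) (q : Q)
    (α : List V) (a : Act) (β : List V) : Prop :=
  (a = τ ∧ β = T.out q α) ∨
  ∃ αk β', ConstTauSeq G.tr τ T q α αk ∧ G.tr αk a β' ∧ β = T.out q β'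

/-- The equivalence `α₁ ≈_q α₂`: the same long moves are available. -/
def TApprox {Q V Act : Type} (G : BPA V Act) (τ : Act) (T : Transducer Q V) (q : Q)
    (α₁ α₂ : List V) : Prop :=
  ∀ a β, BigStep G τ T q α₁ a β ↔ BigStep G τ T q α₂ a β

/-- Consistency of an nfc-transducer with a BPA system (Definition 4.1). -/
def ConsistentWith {Q V Act : Type} (T : Transducer Q V) (G : BPA V Act) (τ : Act) : Prop :=
  (∀ A : V, T.out T.q0 [A] = [] → TApprox G τ T T.q0 [A] []) ∧
  (∀ (q : Q) (A : V), T.out q [A] ≠ [] → TApprox G τ T q [A] (T.out q [A])) ∧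
  (∀ (q : Q) (A C : V), T.out q [A, C] = [C] → T.out q [C] = [C] →
    TApprox G τ T q [A, C] [C])

/-! The key fact is that, in a normed system, redundancy passes to suffixes: if `αγ ~ γ`, then
`ζγ ~ γ` for every suffix `ζ` of `α`. Bisimilar states have the same class-change norm, so an
optimal path from `αγ` to a silent state makes at most `ccNorm γ` class changes. Every path from
a state `σγ` to a silent state makes at least `ccNorm γ` of them, so this one cannot change class
before it has consumed `α`: every state it visits above `γ`, in particular each `ζγ`, stays in
the class of `αγ` (unless the path stops earlier at a silent state; all silent states are
bisimilar).

Consequently, if `R_γ ⊆ R_δ`, then `ζγ ~ γ` implies `ζδ ~ δ`, peeling `ζ` one variable at a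
time. Finally `~`, together with the pairs `(αδ, βδ)` for which `αγ ~ βγ` and `αγ ≁ γ`, is a
branching bisimulation: as long as the `γ`-process is not redundant its moves do not touch `γ`
and can be copied verbatim above `δ`, and once both sides become redundant they are both `~ δ`. -/

section LTS

variable {S Act : Type} {tr : S → Act → S → Prop} {τ : Act}

namespace TauSeq

variable {B B' : S → S → Prop}

theorem mono {s s' t u : S} (h : TauSeq tr τ B s t u) (f : ∀ v, B s v → B' s' v) :
    TauSeq tr τ B' s' t u := by
  induction h with
  | refl t => exact .refl t
  | step h₁ h₂ _ ih => exact .step h₁ (f _ h₂) ih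

theorem trans {s t u v : S} (h : TauSeq tr τ B s t u) (h' : TauSeq tr τ B s u v) :
    TauSeq tr τ B s t v := by
  induction h with
  | refl => exact h'
  | step h₁ h₂ _ ih => exact .step h₁ h₂ (ih h')

theorem rel_last {s t u : S} (h : TauSeq tr τ B s t u) (h₀ : B s t) : B s u := by
  induction h with
  | refl => exact h₀
  | step _ h₂ _ ih => exact ih h₂

theorem eq_or_exists_last {s t u : S} (h : TauSeq tr τ B s t u) :
    t = u ∨ ∃ p, TauSeq tr τ B s t p ∧ tr p τ u := by
  induction h with
  | refl => exact Or.inl rfl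
  | step h₁ h₂ _ ih =>
    rcases ih with rfl | ⟨p, hp, hpu⟩
    · exact Or.inr ⟨_, .refl _, h₁⟩
    · exact Or.inr ⟨p, .step h₁ h₂ hp, hpu⟩

theorem exists_steps {s t u : S} (h : TauSeq tr τ B s t u) : ∃ w, Steps tr t w u := by
  induction h with
  | refl t => exact ⟨[], .refl t⟩
  | step h₁ _ _ ih =>
    obtain ⟨w, hw⟩ := ih
    exact ⟨τ :: w, .step h₁ hw⟩

end TauSeq

theorem IsBranchingBisim.flip {B : S → S → Prop} (h : IsBranchingBisim tr τ B) :
    IsBranchingBisim tr τ (fun u v => B v u) :=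
  fun s t hst => (h t s hst).symm

theorem IsBranchingBisim.of_symm {B : S → S → Prop} (hsymm : ∀ s t, B s t → B t s)
    (h : ∀ s t, B s t → ∀ a s', tr s a s' →
      (a = τ ∧ B s' t) ∨ ∃ tk t', TauSeq tr τ B s t tk ∧ tr tk a t' ∧ B s' t') :
    IsBranchingBisim tr τ B := by
  refine fun s t hst => ⟨h s t hst, fun a t' hm => ?_⟩
  rcases h t s (hsymm _ _ hst) a t' hm with ⟨ha, hb⟩ | ⟨sk, s', hseq, hmv, hrel⟩
  · exact Or.inl ⟨ha, hsymm _ _ hb⟩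
  · exact Or.inr ⟨sk, s', hseq.mono fun v hv => hsymm _ _ hv, hmv, hsymm _ _ hrel⟩

namespace BBisim

theorem refl (s : S) : BBisim tr τ s s := by
  refine ⟨Eq, IsBranchingBisim.of_symm (fun _ _ => Eq.symm) ?_, rfl⟩
  rintro s _ rfl a s' hm
  exact Or.inr ⟨s, s', .refl s, hm, rfl⟩

theorem symm {s t : S} (h : BBisim tr τ s t) : BBisim tr τ t s :=
  let ⟨_, hB, hst⟩ := h
  ⟨_, hB.flip, hst⟩

theorem isBranchingBisim : IsBranchingBisim tr τ (BBisim tr τ) := by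
  refine IsBranchingBisim.of_symm (fun _ _ => symm) ?_
  rintro s t ⟨B, hB, hst⟩ a s' hm
  rcases (hB s t hst).1 a s' hm with ⟨ha, hb⟩ | ⟨tk, t', hseq, hmv, hb⟩
  · exact Or.inl ⟨ha, B, hB, hb⟩
  · exact Or.inr ⟨tk, t', hseq.mono fun v hv => ⟨B, hB, hv⟩, hmv, B, hB, hb⟩

theorem match_step {s t : S} (hst : BBisim tr τ s t) {a : Act} {s' : S} (hm : tr s a s') :
    (a = τ ∧ BBisim tr τ s' t) ∨
      ∃ tk t', TauSeq tr τ (BBisim tr τ) s t tk ∧ tr tk a t' ∧ BBisim tr τ s' t' :=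
  (isBranchingBisim s t hst).1 a s' hm

theorem exists_tauSeq_of_tauSeq {s r rk t : S} (hseq : TauSeq tr τ (BBisim tr τ) s r rk)
    (hsr : BBisim tr τ s r) (hrt : BBisim tr τ r t) :
    ∃ tm, TauSeq tr τ (fun u v => ∃ w, BBisim tr τ u w ∧ BBisim tr τ w v) s t tm ∧
      BBisim tr τ rk tm := by
  induction hseq generalizing t with
  | refl => exact ⟨t, .refl t, hrt⟩
  | @step r r₁ rk h₁ h₂ _ ih =>
    rcases hrt.match_step h₁ with ⟨_, hb⟩ | ⟨tk, t₂, hseq₂, hmv₂, hb₂⟩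
    · exact ih h₂ hb
    · obtain ⟨tm, hseqm, hrkm⟩ := ih h₂ hb₂
      have hpre : TauSeq tr τ (fun u v => ∃ w, BBisim tr τ u w ∧ BBisim tr τ w v) s t tk :=
        hseq₂.mono fun v hv => ⟨r, hsr, hv⟩
      exact ⟨tm, (hpre.trans (.step hmv₂ ⟨r₁, h₂, hb₂⟩ (.refl t₂))).trans hseqm, hrkm⟩

theorem trans {s r t : S} (h₁ : BBisim tr τ s r) (h₂ : BBisim tr τ r t) : BBisim tr τ s t := by
  refine ⟨fun u v => ∃ w, BBisim tr τ u w ∧ BBisim tr τ w v, ?_, r, h₁, h₂⟩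
  refine IsBranchingBisim.of_symm (fun u v ⟨w, hw₁, hw₂⟩ => ⟨w, hw₂.symm, hw₁.symm⟩) ?_
  rintro s t ⟨r, hsr, hrt⟩ a s' hm
  rcases hsr.match_step hm with ⟨ha, hb⟩ | ⟨rk, r', hseq, hmv, hb⟩
  · exact Or.inl ⟨ha, r, hb, hrt⟩
  obtain ⟨tm, hseqm, hrkm⟩ := exists_tauSeq_of_tauSeq hseq hsr hrt
  rcases hrkm.match_step hmv with ⟨rfl, hb'⟩ | ⟨tk, t', hseq', hmv', hb'⟩
  · rcases hseqm.eq_or_exists_last with rfl | ⟨tp, hseqp, hmvp⟩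
    · exact Or.inl ⟨rfl, r', hb, hb'⟩
    · exact Or.inr ⟨tp, tm, hseqp, hmvp, r', hb, hb'⟩
  · have hsrk := hseq.rel_last hsr
    exact Or.inr ⟨tk, t', hseqm.trans (hseq'.mono fun v hv => ⟨rk, hsrk, hv⟩), hmv', r', hb, hb'⟩

end BBisim

theorem Steps.append {s t u : S} {w w' : List Act} (h : Steps tr s w t) (h' : Steps tr t w' u) :
    Steps tr s (w ++ w') u := by
  induction h with
  | refl => exact h'
  | step h₁ _ ih => exact .step h₁ (ih h')

theorem Steps.exists_ccPath {s t : S} {w : List Act} (h : Steps tr s w t) :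
    ∃ n, CCPath tr τ s n t := by
  induction h with
  | refl s => exact ⟨0, .refl s⟩
  | @step s a s' _ _ h₁ _ ih =>
    obtain ⟨n, hn⟩ := ih
    by_cases hb : BBisim tr τ s s'
    · exact ⟨n, .stepEq h₁ hb hn⟩
    · exact ⟨n + 1, .stepNe h₁ hb hn⟩

namespace SilentState

theorem of_steps {s u : S} {w : List Act} (hs : SilentState tr τ s) (h : Steps tr s w u) :
    SilentState tr τ u :=
  fun w' u' h' a ha => hs (w ++ w') u' (h.append h') a (List.mem_append_right w ha)

theorem bbisim {s t : S} (hs : SilentState tr τ s) (ht : SilentState tr τ t) :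
    BBisim tr τ s t := by
  refine ⟨fun u v => SilentState tr τ u ∧ SilentState tr τ v, ?_, hs, ht⟩
  refine IsBranchingBisim.of_symm (fun _ _ h => ⟨h.2, h.1⟩) ?_
  rintro s t ⟨hs, ht⟩ a s' hm
  have hstep : Steps tr s [a] s' := .step hm (.refl s')
  exact Or.inl ⟨hs [a] s' hstep a (List.mem_singleton_self a), hs.of_steps hstep, ht⟩

theorem of_bbisim {s t : S} (ht : SilentState tr τ t) (hst : BBisim tr τ s t) :
    SilentState tr τ s := by
  intro w s' hsteps
  induction hsteps generalizing t with
  | refl => simp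
  | @step s a _ _ _ hm _ ih =>
    rintro b hb
    rcases hst.match_step hm with ⟨ha, hb'⟩ | ⟨tk, t', hseq, hmv, hb'⟩
    · rcases List.mem_cons.mp hb with rfl | hb
      · exact ha
      · exact ih ht hb' b hb
    · obtain ⟨w₀, hw₀⟩ := hseq.exists_steps
      have hsteps : Steps tr t (w₀ ++ [a]) t' := hw₀.append (.step hmv (.refl t'))
      rcases List.mem_cons.mp hb with rfl | hb
      · exact ht _ _ hsteps b (by simp)
      · exact ih (ht.of_steps hsteps) hb' b hb

end SilentState

theorem TauSeq.ccPath_trans {s t tk u : S} {c : ℕ} (h : TauSeq tr τ (BBisim tr τ) s t tk)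
    (hst : BBisim tr τ s t) (hp : CCPath tr τ tk c u) : CCPath tr τ t c u := by
  induction h with
  | refl => exact hp
  | step h₁ h₂ _ ih => exact .stepEq h₁ (hst.symm.trans h₂) (ih h₂ hp)

theorem CCPath.exists_le_of_bbisim {s u : S} {c : ℕ} (h : CCPath tr τ s c u)
    (hu : SilentState tr τ u) {t : S} (hst : BBisim tr τ s t) :
    ∃ c' ≤ c, ∃ u', CCPath tr τ t c' u' ∧ SilentState tr τ u' := by
  induction h generalizing t with
  | refl s => exact ⟨0, le_rfl, t, .refl t, hu.of_bbisim hst.symm⟩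
  | stepEq _ h₂ _ ih => exact ih hu (h₂.symm.trans hst)
  | @stepNe s a s₁ c u h₁ h₂ _ ih =>
    rcases hst.match_step h₁ with ⟨_, hb⟩ | ⟨tk, t', hseq, hmv, hb⟩
    · exact absurd (hst.trans hb.symm) h₂
    obtain ⟨c', hle, u', hp, hu'⟩ := ih hu hb
    have hcc : ¬ BBisim tr τ tk t' := fun hx =>
      h₂ ((hseq.rel_last hst).trans (hx.trans hb.symm))
    exact ⟨c' + 1, by omega, u', hseq.ccPath_trans hst (.stepNe hmv hcc hp), hu'⟩

theorem ccNorm_le_of_ccPath {s u : S} {ℓ : ℕ} (h : CCPath tr τ s ℓ u) (hu : SilentState tr τ u) :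
    ccNorm tr τ s ≤ ℓ :=
  sInf_le ⟨ℓ, rfl, u, h, hu⟩

theorem BBisim.ccNorm_le {s t : S} (h : BBisim tr τ s t) : ccNorm tr τ t ≤ ccNorm tr τ s := by
  refine le_sInf ?_
  rintro _ ⟨ℓ, rfl, u, hp, hu⟩
  obtain ⟨c', hle, u', hp', hu'⟩ := hp.exists_le_of_bbisim hu h
  exact (ccNorm_le_of_ccPath hp' hu').trans (by exact_mod_cast hle)

end LTS

section Processes

variable {V Act : Type} {G : BPA V Act} {τ : Act}

namespace BPA

theorem not_tr_nil {a : Act} {u : List V} : ¬ G.tr [] a u := by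
  rintro ⟨A, γ, β, _, h, _⟩
  cases h

theorem tr_append_right {σ σ' : List V} {a : Act} (h : G.tr σ a σ') (ρ : List V) :
    G.tr (σ ++ ρ) a (σ' ++ ρ) := by
  obtain ⟨A, γ, β, hrule, rfl, rfl⟩ := h
  exact ⟨A, γ, β ++ ρ, hrule, rfl, by simp⟩

theorem exists_tr_of_tr_append {σ ρ u : List V} {a : Act} (hσ : σ ≠ [])
    (h : G.tr (σ ++ ρ) a u) : ∃ σ', u = σ' ++ ρ ∧ G.tr σ a σ' := by
  obtain ⟨A, γ, β, hrule, heq, rfl⟩ := h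
  obtain ⟨X, σ₀, rfl⟩ := List.exists_cons_of_ne_nil hσ
  obtain ⟨rfl, rfl⟩ := List.cons.inj heq
  exact ⟨γ ++ σ₀, by simp, X, γ, σ₀, hrule, rfl, rfl⟩

theorem isSuffix_of_tr {σ σ' ζ : List V} {a : Act} (h : G.tr σ a σ') (hζ : ζ <:+ σ)
    (hne : ζ ≠ σ) : ζ <:+ σ' := by
  obtain ⟨X, γ, σ₀, _, rfl, rfl⟩ := h
  rcases List.suffix_cons_iff.mp hζ with rfl | hζ
  · exact absurd rfl hne
  · exact hζ.trans (List.suffix_append γ σ₀)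

theorem steps_append_right {σ σ' : List V} {w : List Act} (h : Steps G.tr σ w σ')
    (ρ : List V) : Steps G.tr (σ ++ ρ) w (σ' ++ ρ) := by
  induction h with
  | refl => exact .refl _
  | step h₁ _ ih => exact .step (tr_append_right h₁ ρ) ih

theorem silentState_nil : SilentState G.tr τ [] := by
  rintro _ _ (_ | ⟨h, _⟩) a ha
  · cases ha
  · exact absurd h not_tr_nil

theorem exists_steps_nil_of_norm_ne_top {σ : List V} (h : G.norm σ ≠ ⊤) :
    ∃ w, Steps G.tr σ w [] := by
  by_contra hne
  refine h (sInf_eq_top.mpr ?_)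
  rintro _ ⟨w, rfl, hw⟩
  exact absurd ⟨w, hw⟩ hne

theorem Normed.exists_steps_append (hG : G.Normed) (σ ρ : List V) :
    ∃ w, Steps G.tr (σ ++ ρ) w ρ := by
  induction σ with
  | nil => exact ⟨[], .refl ρ⟩
  | cons A σ ih =>
    obtain ⟨w₁, hw₁⟩ := exists_steps_nil_of_norm_ne_top (hG A)
    obtain ⟨w₂, hw₂⟩ := ih
    exact ⟨w₁ ++ w₂, (steps_append_right hw₁ (σ ++ ρ)).append hw₂⟩

theorem Normed.silentState_of_append (hG : G.Normed) {σ ρ : List V}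
    (h : SilentState G.tr τ (σ ++ ρ)) : SilentState G.tr τ ρ :=
  h.of_steps (hG.exists_steps_append σ ρ).choose_spec

theorem Normed.exists_ccPath_ccNorm (hG : G.Normed) (σ : List V) :
    ∃ ℓ u, CCPath G.tr τ σ ℓ u ∧ SilentState G.tr τ u ∧ ccNorm G.tr τ σ = ℓ := by
  obtain ⟨w, hw⟩ := hG.exists_steps_append σ []
  obtain ⟨n, hn⟩ := hw.exists_ccPath (τ := τ)
  obtain ⟨ℓ, hℓ, u, hp, hu⟩ := csInf_mem (⟨n, n, rfl, [], by simpa using hn, silentState_nil⟩ :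
    {m : ℕ∞ | ∃ ℓ : ℕ, m = ℓ ∧ ∃ u, CCPath G.tr τ σ ℓ u ∧ SilentState G.tr τ u}.Nonempty)
  exact ⟨ℓ, u, hp, hu, hℓ⟩

end BPA

theorem BBisim.append_left {σ σ' : List V} (h : BBisim G.tr τ σ σ') (ζ : List V) :
    BBisim G.tr τ (ζ ++ σ) (ζ ++ σ') := by
  refine ⟨fun x y => ∃ ζ σ σ', x = ζ ++ σ ∧ y = ζ ++ σ' ∧ BBisim G.tr τ σ σ', ?_,
    ζ, σ, σ', rfl, rfl, h⟩
  refine IsBranchingBisim.of_symm ?_ ?_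
  · rintro _ _ ⟨ζ, σ, σ', rfl, rfl, hb⟩
    exact ⟨ζ, σ', σ, rfl, rfl, hb.symm⟩
  rintro _ _ ⟨ζ, σ, σ', rfl, rfl, hb⟩ a x' hm
  rcases eq_or_ne ζ [] with rfl | hζ
  · rcases hb.match_step hm with ⟨ha, hb'⟩ | ⟨tk, t', hseq, hmv, hb'⟩
    · exact Or.inl ⟨ha, [], x', σ', rfl, rfl, hb'⟩
    · exact Or.inr ⟨tk, t', hseq.mono fun v hv => ⟨[], σ, v, rfl, rfl, hv⟩, hmv,
        [], x', t', rfl, rfl, hb'⟩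
  · obtain ⟨ζ', rfl, hmv⟩ := BPA.exists_tr_of_tr_append hζ hm
    exact Or.inr ⟨ζ ++ σ', ζ' ++ σ', .refl _, BPA.tr_append_right hmv σ',
      ζ', σ, σ', rfl, rfl, hb⟩

theorem redSet_eq_of_bbisim {σ σ' : List V} (h : BBisim G.tr τ σ σ') :
    RedSet G τ σ = RedSet G τ σ' := by
  ext X
  exact ⟨fun hX => ((h.symm.append_left [X]).trans hX).trans h,
    fun hX => ((h.append_left [X]).trans hX).trans h.symm⟩

theorem ccNorm_le_of_ccPath_append (hG : G.Normed) {σ γ u : List V} {n : ℕ}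
    (h : CCPath G.tr τ (σ ++ γ) n u) (hu : SilentState G.tr τ u) :
    ccNorm G.tr τ γ ≤ n := by
  generalize hv : σ ++ γ = v at h
  induction h generalizing σ with
  | refl =>
    subst hv
    exact ccNorm_le_of_ccPath (.refl γ) (hG.silentState_of_append hu)
  | stepEq h₁ h₂ h₃ ih =>
    subst hv
    rcases eq_or_ne σ [] with rfl | hσ
    · exact ccNorm_le_of_ccPath (.stepEq h₁ h₂ h₃) hu
    · obtain ⟨σ', rfl, _⟩ := BPA.exists_tr_of_tr_append hσ h₁
      exact ih hu rfl
  | stepNe h₁ h₂ h₃ ih =>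
    subst hv
    rcases eq_or_ne σ [] with rfl | hσ
    · exact ccNorm_le_of_ccPath (.stepNe h₁ h₂ h₃) hu
    · obtain ⟨σ', rfl, _⟩ := BPA.exists_tr_of_tr_append hσ h₁
      exact (ih hu rfl).trans (by exact_mod_cast Nat.le_succ _)

theorem bbisim_append_of_ccPath (hG : G.Normed) {σ γ u ζ : List V} {c : ℕ}
    (h : CCPath G.tr τ (σ ++ γ) c u) (hu : SilentState G.tr τ u)
    (hc : (c : ℕ∞) ≤ ccNorm G.tr τ γ) (hζ : ζ <:+ σ) :
    BBisim G.tr τ (ζ ++ γ) (σ ++ γ) := by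
  generalize hv : σ ++ γ = v at h
  induction h generalizing σ with
  | refl =>
    subst hv
    obtain ⟨ρ, rfl⟩ := hζ
    rw [List.append_assoc] at hu ⊢
    exact (hG.silentState_of_append hu).bbisim hu
  | stepEq h₁ h₂ _ ih =>
    subst hv
    rcases eq_or_ne ζ σ with rfl | hne
    · exact .refl _
    have hσ : σ ≠ [] := by rintro rfl; exact hne (List.suffix_nil.mp hζ)
    obtain ⟨σ', rfl, hmv⟩ := BPA.exists_tr_of_tr_append hσ h₁
    exact (ih hu hc (BPA.isSuffix_of_tr hmv hζ hne) rfl).trans h₂.symm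
  | @stepNe _ _ _ n _ h₁ _ h₃ =>
    subst hv
    rcases eq_or_ne ζ σ with rfl | hne
    · exact .refl _
    have hσ : σ ≠ [] := by rintro rfl; exact hne (List.suffix_nil.mp hζ)
    obtain ⟨σ', rfl, _⟩ := BPA.exists_tr_of_tr_append hσ h₁
    have hle : ((n + 1 : ℕ) : ℕ∞) ≤ n := hc.trans (ccNorm_le_of_ccPath_append hG h₃ hu)
    exact absurd (by exact_mod_cast hle) n.not_succ_le_self

theorem bbisim_append_of_isSuffix (hG : G.Normed) {α γ ζ : List V}
    (h : BBisim G.tr τ (α ++ γ) γ) (hζ : ζ <:+ α) : BBisim G.tr τ (ζ ++ γ) γ := by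
  obtain ⟨ℓ, u, hp, hu, hℓ⟩ := hG.exists_ccPath_ccNorm (τ := τ) (α ++ γ)
  have hc : (ℓ : ℕ∞) ≤ ccNorm G.tr τ γ := hℓ ▸ h.symm.ccNorm_le
  exact (bbisim_append_of_ccPath hG hp hu hc hζ).trans h

theorem bbisim_append_self_of_redSet_subset (hG : G.Normed) {γ δ : List V}
    (hR : RedSet G τ γ ⊆ RedSet G τ δ) :
    ∀ {ζ : List V}, BBisim G.tr τ (ζ ++ γ) γ → BBisim G.tr τ (ζ ++ δ) δ
  | [], _ => .refl δ
  | X :: ζ, h => by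
    have hζ : BBisim G.tr τ (ζ ++ γ) γ := bbisim_append_of_isSuffix hG h (List.suffix_cons X ζ)
    have hX : X ∈ RedSet G τ γ := by
      rw [← redSet_eq_of_bbisim hζ]
      exact h.trans hζ.symm
    exact ((bbisim_append_self_of_redSet_subset hG hR hζ).append_left [X]).trans (hR hX)

theorem TauSeq.exists_append_right {B B' : List V → List V → Prop} {s s' γ δ β₁ u : List V}
    (h : TauSeq G.tr τ B s (β₁ ++ γ) u) (hβ₁ : β₁ ≠ [])
    (hB : ∀ β, B s (β ++ γ) → β ≠ [] ∧ B' s' (β ++ δ)) :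
    ∃ β₂, u = β₂ ++ γ ∧ TauSeq G.tr τ B' s' (β₁ ++ δ) (β₂ ++ δ) := by
  generalize hv : β₁ ++ γ = v at h
  induction h generalizing β₁ with
  | refl => exact ⟨β₁, hv.symm, .refl _⟩
  | step h₁ h₂ _ ih =>
    subst hv
    obtain ⟨β', rfl, hmv⟩ := BPA.exists_tr_of_tr_append hβ₁ h₁
    obtain ⟨hβ', hB'⟩ := hB β' h₂
    obtain ⟨β₂, rfl, hseq⟩ := ih hβ' rfl
    exact ⟨β₂, rfl, .step (BPA.tr_append_right hmv δ) hB' hseq⟩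

def SuffixTransfer (G : BPA V Act) (τ : Act) (γ δ x y : List V) : Prop :=
  BBisim G.tr τ x y ∨ ∃ α β, x = α ++ δ ∧ y = β ++ δ ∧
    BBisim G.tr τ (α ++ γ) (β ++ γ) ∧ ¬ BBisim G.tr τ (α ++ γ) γ

theorem SuffixTransfer.of_bbisim (hG : G.Normed) {γ δ : List V}
    (hR : RedSet G τ γ ⊆ RedSet G τ δ) {α β : List V} (h : BBisim G.tr τ (α ++ γ) (β ++ γ)) :
    SuffixTransfer G τ γ δ (α ++ δ) (β ++ δ) := by
  by_cases hα : BBisim G.tr τ (α ++ γ) γ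
  · have hβ := h.symm.trans hα
    exact Or.inl ((bbisim_append_self_of_redSet_subset hG hR hα).trans
      (bbisim_append_self_of_redSet_subset hG hR hβ).symm)
  · exact Or.inr ⟨α, β, rfl, rfl, h, hα⟩

theorem isBranchingBisim_suffixTransfer (hG : G.Normed) {γ δ : List V}
    (hR : RedSet G τ γ ⊆ RedSet G τ δ) : IsBranchingBisim G.tr τ (SuffixTransfer G τ γ δ) := by
  refine IsBranchingBisim.of_symm ?_ ?_
  · rintro _ _ (hb | ⟨α, β, rfl, rfl, hb, hα⟩)
    · exact Or.inl hb.symm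
    · exact Or.inr ⟨β, α, rfl, rfl, hb.symm, fun hβ => hα (hb.trans hβ)⟩
  rintro _ _ (hb | ⟨α, β, rfl, rfl, hb, hα⟩) a x' hm
  · rcases hb.match_step hm with ⟨ha, hb'⟩ | ⟨tk, t', hseq, hmv, hb'⟩
    · exact Or.inl ⟨ha, Or.inl hb'⟩
    · exact Or.inr ⟨tk, t', hseq.mono fun v hv => Or.inl hv, hmv, Or.inl hb'⟩
  have hne : ∀ {β}, BBisim G.tr τ (α ++ γ) (β ++ γ) → β ≠ [] := by
    rintro β hβ rfl
    exact hα hβ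
  obtain ⟨α', rfl, hmv⟩ := BPA.exists_tr_of_tr_append (hne (.refl _)) hm
  rcases hb.match_step (BPA.tr_append_right hmv γ) with ⟨ha, hb'⟩ | ⟨tk, t', hseq, hmv', hb'⟩
  · exact Or.inl ⟨ha, SuffixTransfer.of_bbisim hG hR hb'⟩
  obtain ⟨β₂, rfl, hseqδ⟩ := hseq.exists_append_right (B' := SuffixTransfer G τ γ δ)
    (s' := α ++ δ) (hne hb) fun β hβ => ⟨hne hβ, Or.inr ⟨α, β, rfl, rfl, hβ, hα⟩⟩
  obtain ⟨β₃, rfl, hmvβ⟩ := BPA.exists_tr_of_tr_append (hne (hseq.rel_last hb)) hmv'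
  exact Or.inr ⟨β₂ ++ δ, β₃ ++ δ, hseqδ, BPA.tr_append_right hmvβ δ,
    SuffixTransfer.of_bbisim hG hR hb'⟩

theorem bbisim_append_of_redSet_subset (hG : G.Normed) {γ δ : List V}
    (hR : RedSet G τ γ ⊆ RedSet G τ δ) {α β : List V} (h : BBisim G.tr τ (α ++ γ) (β ++ γ)) :
    BBisim G.tr τ (α ++ δ) (β ++ δ) :=
  ⟨_, isBranchingBisim_suffixTransfer hG hR, SuffixTransfer.of_bbisim hG hR h⟩

end Processes

/-- if `R_γ = R_δ`, then `αγ ~ βγ ↔ αδ ~ βδ` for all `α, β`;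
in particular `R_{Aγ} = R_{Aδ}` for every `A`. -/
theorem redset_determines_equivalence {V Act : Type} (G : BPA V Act) (τ : Act)
    (hG : G.Normed) (γ δ : List V) (h : RedSet G τ γ = RedSet G τ δ) :
    (∀ α β : List V,
      BBisim G.tr τ (α ++ γ) (β ++ γ) ↔ BBisim G.tr τ (α ++ δ) (β ++ δ)) ∧
    (∀ A : V, RedSet G τ (A :: γ) = RedSet G τ (A :: δ)) := by
  have hiff : ∀ α β : List V,
      BBisim G.tr τ (α ++ γ) (β ++ γ) ↔ BBisim G.tr τ (α ++ δ) (β ++ δ) := fun α β =>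
    ⟨bbisim_append_of_redSet_subset hG h.subset, bbisim_append_of_redSet_subset hG h.superset⟩
  exact ⟨hiff, fun A => Set.ext fun X => hiff [X, A] [A]⟩
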